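/- Assume that 𝒜 is closed, 𝒫 is compact, V₀ is lower semicontinuous, V₁ is upper semicontinuous, and ℒ = {0}. Then the set 𝒞 is closed in 𝒳 × ℝ, the risk measure ρ is lower semicontinuous, and for every X ∈ 𝒳 with ρ(X) ∈ ℝ the infimum defining ρ(X) is attained: there exists x ∈ 𝒫 with X + V₁(x) ∈ 𝒜 and V₀(x) = ρ(X). -/

import Mathlib

open Topology Filter Set Pointwise

noncomputable section

/-- The asymptotic cone `C^∞` of a set `C` in a real topological vector space: the set of all
limits `z` of nets `l_α • c_α` with `c_α ∈ C`, `l_α ≥ 0`, `l_α → 0`, expressed via the standard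
neighborhood characterization of net convergence. -/
def asymCone {E : Type*} [AddCommMonoid E] [SMul ℝ E] [TopologicalSpace E] (C : Set E) :
    Set E :=
  {z | ∀ U ∈ 𝓝 z, ∀ ε : ℝ, 0 < ε → ∃ c ∈ C, ∃ l : ℝ, 0 ≤ l ∧ l < ε ∧ l • c ∈ U}

/-- Epigraph of a real-valued function. -/
def epigraph {E : Type*} (f : E → ℝ) : Set (E × ℝ) := {p | f p.1 ≤ p.2}

/-- The risk measure `ρ` associated to `(A, P, V₀, V₁)`, valued in the extended reals
(`sInf ∅ = ⊤`). -/
def riskM {X : Type*} [AddCommMonoid X] {N : ℕ} (A : Set X) (P : Set (Fin N → ℝ))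
    (V₀ : (Fin N → ℝ) → ℝ) (V₁ : (Fin N → ℝ) → X) (Z : X) : EReal :=
  sInf ((fun x => ((V₀ x : ℝ) : EReal)) '' {x | x ∈ P ∧ Z + V₁ x ∈ A})

/-- The set `ℒ = {x ∈ 𝒫^∞ : V₀^∞(x) ≤ 0, V₁(x) ∈ 𝒜^∞}`.  Here `V₀^∞(x) ≤ 0` is expressed as
`(x, 0)` belonging to the asymptotic cone of the epigraph of `V₀`, which is by definition the
epigraph of `V₀^∞`. -/
def Lset {X : Type*} [AddCommMonoid X] [SMul ℝ X] [TopologicalSpace X] {N : ℕ}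
    (A : Set X) (P : Set (Fin N → ℝ)) (V₀ : (Fin N → ℝ) → ℝ) (V₁ : (Fin N → ℝ) → X) :
    Set (Fin N → ℝ) :=
  {x | x ∈ asymCone P ∧ (x, (0 : ℝ)) ∈ asymCone (epigraph V₀) ∧ V₁ x ∈ asymCone A}

/-- Upper semicontinuity of the liquidation rule `V₁` relative to the ordering cone `Xp`:
for every `x` and every neighborhood `U` of `V₁ x` there is a neighborhood `W` of `x` with
`V₁(W) ⊆ U - Xp`. -/
def USCV1 {X : Type*} [AddCommGroup X] [TopologicalSpace X] {N : ℕ}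
    (Xp : Set X) (V₁ : (Fin N → ℝ) → X) : Prop :=
  ∀ x : Fin N → ℝ, ∀ U ∈ 𝓝 (V₁ x), ∃ W ∈ 𝓝 x, ∀ y ∈ W, ∃ u ∈ U, ∃ p ∈ Xp, V₁ y = u - p

/-
`𝒞` is the projection, along the compact factor `𝒫`, of the set of triples `(X, m, x)` with
`V₀ x ≤ m` and `X + V₁ x ∈ 𝒜`. That set is closed: `V₀` is lower semicontinuous, and
`{(X, x) | X + V₁ x ∈ 𝒜}` is closed because `𝒜` is closed and stable under adding `𝒳₊`, which
absorbs the one-sided error allowed by the upper semicontinuity of `V₁`. Projections along a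
compact factor are closed maps. Once `𝒞` is closed, `ρ X ≤ m ↔ (X, m) ∈ 𝒞`, so `𝒞` is the
epigraph of `ρ`; this gives lower semicontinuity, and `m = ρ X` gives a minimiser.
-/

theorem IsClosed.setOf_exists_mem_of_isCompact {Y T : Type*} [TopologicalSpace Y]
    [TopologicalSpace T] {K : Set T} (hK : IsCompact K) {S : Set (Y × T)} (hS : IsClosed S) :
    IsClosed {y | ∃ x ∈ K, (y, x) ∈ S} := by
  have : CompactSpace K := isCompact_iff_compactSpace.mp hK
  have hS' : IsClosed {q : Y × K | (q.1, (q.2 : T)) ∈ S} :=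
    hS.preimage (continuous_fst.prodMk (continuous_subtype_val.comp continuous_snd))
  convert isClosedMap_fst_of_compactSpace _ hS' using 1
  ext y
  simp

theorem isClosed_setOf_add_mem_of_uscv1 {X : Type*} [AddCommGroup X] [TopologicalSpace X]
    [ContinuousAdd X] {N : ℕ} {Xp A : Set X} {V₁ : (Fin N → ℝ) → X}
    (hAmono : ∀ a ∈ A, ∀ p ∈ Xp, a + p ∈ A) (hA : IsClosed A) (hV₁ : USCV1 Xp V₁) :
    IsClosed {q : X × (Fin N → ℝ) | q.1 + V₁ q.2 ∈ A} := by
  rw [← isOpen_compl_iff, isOpen_iff_mem_nhds]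
  rintro ⟨Z, x⟩ hZx
  have hsum : (fun q : X × X => q.1 + q.2) ⁻¹' Aᶜ ∈ 𝓝 (Z, V₁ x) :=
    continuous_add.tendsto (Z, V₁ x) (hA.isOpen_compl.mem_nhds hZx)
  obtain ⟨U₁, hU₁, U, hU, hprod⟩ := mem_nhds_prod_iff.mp hsum
  obtain ⟨W, hW, hWU⟩ := hV₁ x U hU
  filter_upwards [prod_mem_nhds hU₁ hW] with ⟨Z', y⟩ ⟨hZ', hy⟩ hmem
  obtain ⟨u, hu, p, hp, hV₁y⟩ := hWU y hy
  have hshift : Z' + V₁ y + p = Z' + u := by rw [hV₁y]; abel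
  have hu_mem : Z' + u ∈ A := hshift ▸ hAmono _ hmem p hp
  exact hprod (mk_mem_prod hZ' hu) hu_mem

section RiskMeasure

variable {X : Type*} [AddCommGroup X] {N : ℕ} {A : Set X} {P : Set (Fin N → ℝ)}
  {V₀ : (Fin N → ℝ) → ℝ} {V₁ : (Fin N → ℝ) → X}

variable (A P V₀ V₁) in
def hedgeSet : Set (X × ℝ) := {p | ∃ x ∈ P, V₀ x ≤ p.2 ∧ p.1 + V₁ x ∈ A}

theorem isClosed_hedgeSet [TopologicalSpace X] [ContinuousAdd X] {Xp : Set X}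
    (hAmono : ∀ a ∈ A, ∀ p ∈ Xp, a + p ∈ A) (hA : IsClosed A) (hP : IsCompact P)
    (hV₀ : LowerSemicontinuous V₀) (hV₁ : USCV1 Xp V₁) :
    IsClosed (hedgeSet A P V₀ V₁) := by
  have hcost : IsClosed {q : (X × ℝ) × (Fin N → ℝ) | V₀ q.2 ≤ q.1.2} :=
    hV₀.isClosed_epigraph.preimage (continuous_snd.prodMk (continuous_snd.comp continuous_fst))
  have hacc : IsClosed {q : (X × ℝ) × (Fin N → ℝ) | q.1.1 + V₁ q.2 ∈ A} :=
    (isClosed_setOf_add_mem_of_uscv1 hAmono hA hV₁).preimage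
      ((continuous_fst.comp continuous_fst).prodMk continuous_snd)
  exact (hcost.inter hacc).setOf_exists_mem_of_isCompact hP

theorem riskM_le {Z : X} {x : Fin N → ℝ} (hxP : x ∈ P) (hxA : Z + V₁ x ∈ A) :
    riskM A P V₀ V₁ Z ≤ V₀ x :=
  sInf_le (mem_image_of_mem _ ⟨hxP, hxA⟩)

theorem riskM_le_of_mem_hedgeSet {Z : X} {r : ℝ} (h : (Z, r) ∈ hedgeSet A P V₀ V₁) :
    riskM A P V₀ V₁ Z ≤ r := by
  obtain ⟨x, hxP, hxr, hxA⟩ := h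
  exact (riskM_le hxP hxA).trans (EReal.coe_le_coe_iff.mpr hxr)

theorem mem_hedgeSet_of_riskM_lt {Z : X} {r : ℝ} (h : riskM A P V₀ V₁ Z < r) :
    (Z, r) ∈ hedgeSet A P V₀ V₁ := by
  rw [riskM, sInf_lt_iff] at h
  obtain ⟨_, ⟨x, ⟨hxP, hxA⟩, rfl⟩, hxr⟩ := h
  exact ⟨x, hxP, (EReal.coe_lt_coe_iff.mp hxr).le, hxA⟩

theorem riskM_le_coe_iff_mem_hedgeSet [TopologicalSpace X]
    (hC : IsClosed (hedgeSet A P V₀ V₁)) {Z : X} {r : ℝ} :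
    riskM A P V₀ V₁ Z ≤ r ↔ (Z, r) ∈ hedgeSet A P V₀ V₁ := by
  refine ⟨fun h => ?_, riskM_le_of_mem_hedgeSet⟩
  have hlim : Tendsto (fun r' : ℝ => (Z, r')) (𝓝[>] r) (𝓝 (Z, r)) :=
    tendsto_const_nhds.prodMk_nhds nhdsWithin_le_nhds
  refine hC.mem_of_tendsto hlim ?_
  filter_upwards [self_mem_nhdsWithin] with r' hr'
  exact mem_hedgeSet_of_riskM_lt (h.trans_lt (EReal.coe_lt_coe_iff.mpr hr'))

theorem lowerSemicontinuous_riskM [TopologicalSpace X]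
    (hC : IsClosed (hedgeSet A P V₀ V₁)) : LowerSemicontinuous (riskM A P V₀ V₁) := by
  intro Z c hc
  obtain ⟨r, hcr, hrZ⟩ := EReal.exists_between_coe_real hc
  have hZ : (Z, r) ∈ (hedgeSet A P V₀ V₁)ᶜ := fun h => hrZ.not_ge (riskM_le_of_mem_hedgeSet h)
  have hopen : IsOpen {Y : X | (Y, r) ∈ (hedgeSet A P V₀ V₁)ᶜ} :=
    hC.isOpen_compl.preimage (continuous_id.prodMk continuous_const)
  filter_upwards [hopen.mem_nhds hZ] with Y hY
  exact hcr.trans (not_le.mp fun h => hY ((riskM_le_coe_iff_mem_hedgeSet hC).mp h))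

theorem exists_riskM_eq [TopologicalSpace X] (hC : IsClosed (hedgeSet A P V₀ V₁)) {Z : X}
    (hbot : riskM A P V₀ V₁ Z ≠ ⊥) (htop : riskM A P V₀ V₁ Z ≠ ⊤) :
    ∃ x ∈ P, Z + V₁ x ∈ A ∧ ((V₀ x : ℝ) : EReal) = riskM A P V₀ V₁ Z := by
  have hr : ((riskM A P V₀ V₁ Z).toReal : EReal) = riskM A P V₀ V₁ Z :=
    EReal.coe_toReal htop hbot
  obtain ⟨x, hxP, hxr, hxA⟩ := (riskM_le_coe_iff_mem_hedgeSet hC).mp hr.ge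
  refine ⟨x, hxP, hxA, le_antisymm ?_ (riskM_le hxP hxA)⟩
  exact hr ▸ EReal.coe_le_coe_iff.mpr hxr

end RiskMeasure

theorem stmt2_general
    {X : Type*} [AddCommGroup X] [TopologicalSpace X]
    [IsTopologicalAddGroup X]
    (Xp : Set X)
    {N : ℕ}
    (P : Set (Fin N → ℝ))
    (V₀ : (Fin N → ℝ) → ℝ)
    (V₁ : (Fin N → ℝ) → X)
    (A : Set X) (hAmono : ∀ a ∈ A, ∀ p ∈ Xp, a + p ∈ A)
    (hAcl : IsClosed A) (hPcomp : IsCompact P)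
    (hV₀lsc : LowerSemicontinuous V₀)
    (hV₁usc : USCV1 Xp V₁) :
    IsClosed {p : X × ℝ | ∃ x ∈ P, V₀ x ≤ p.2 ∧ p.1 + V₁ x ∈ A} ∧
    LowerSemicontinuous (riskM A P V₀ V₁) ∧
    ∀ Z : X, riskM A P V₀ V₁ Z ≠ ⊥ → riskM A P V₀ V₁ Z ≠ ⊤ →
      ∃ x ∈ P, Z + V₁ x ∈ A ∧ ((V₀ x : ℝ) : EReal) = riskM A P V₀ V₁ Z := by
  have hC : IsClosed (hedgeSet A P V₀ V₁) :=
    isClosed_hedgeSet hAmono hAcl hPcomp hV₀lsc hV₁usc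
  exact ⟨hC, lowerSemicontinuous_riskM hC, fun Z hbot htop => exists_riskM_eq hC hbot htop⟩

theorem stmt2
    {X : Type*} [AddCommGroup X] [Module ℝ X] [TopologicalSpace X]
    [IsTopologicalAddGroup X] [ContinuousSMul ℝ X]
    (Xp : Set X) (hXp_cone : ∀ c : ℝ, 0 ≤ c → ∀ z ∈ Xp, c • z ∈ Xp)
    (hXp_conv : Convex ℝ Xp)
    {N : ℕ} (hN : 1 ≤ N)
    (P : Set (Fin N → ℝ)) (hP0 : (0 : Fin N → ℝ) ∈ P)
    (V₀ : (Fin N → ℝ) → ℝ) (hV₀0 : V₀ 0 = 0) (hV₀sp : ∀ x, -V₀ (-x) ≤ V₀ x)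
    (V₁ : (Fin N → ℝ) → X) (hV₁0 : V₁ 0 = 0) (hV₁sp : ∀ x, -V₁ (-x) - V₁ x ∈ Xp)
    (A : Set X) (hA0 : (0 : X) ∈ A) (hAmono : ∀ a ∈ A, ∀ p ∈ Xp, a + p ∈ A)
    (hAcl : IsClosed A) (hPcomp : IsCompact P)
    (hV₀lsc : LowerSemicontinuous V₀)
    (hV₁usc : USCV1 Xp V₁)
    (hL0 : Lset A P V₀ V₁ = {0}) :
    IsClosed {p : X × ℝ | ∃ x ∈ P, V₀ x ≤ p.2 ∧ p.1 + V₁ x ∈ A} ∧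
    LowerSemicontinuous (riskM A P V₀ V₁) ∧
    ∀ Z : X, riskM A P V₀ V₁ Z ≠ ⊥ → riskM A P V₀ V₁ Z ≠ ⊤ →
      ∃ x ∈ P, Z + V₁ x ∈ A ∧ ((V₀ x : ℝ) : EReal) = riskM A P V₀ V₁ Z :=
  stmt2_general Xp P V₀ V₁ A hAmono hAcl hPcomp hV₀lsc hV₁usc
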